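/- For every letter y_s, one has y_s = Σ_{k≥1} (q^{k-1}/k!) Σ_{s'_1+...+s'_k = s, s'_i ≥ 1} π_1(y_{s'_1}) ... π_1(y_{s'_k}), where π_1(y_m) = y_m + Σ_{l≥2} ((-q)^{l-1}/l) Σ_{j_1+...+j_l = m} y_{j_1}...y_{j_l}. -/

import Mathlib

open scoped BigOperators

/-- Words over the alphabet `Y = {y_s : s ≥ 1}`: a word is a list of positive integers. -/
abbrev Word : Type := List ℕ+

/-- The weight of a word `y_{i_1} ⋯ y_{i_r}` is `i_1 + ⋯ + i_r`. -/
def weight (w : Word) : ℕ := (w.map (fun s => (s : ℕ))).sum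

/-- Noncommutative polynomials over `R` on the alphabet `Y`. -/
abbrev NCPoly (R : Type) [CommRing R] : Type := Word →₀ R

variable {R : Type} [CommRing R]

/-- The `q`-stuffle product of two words, as a polynomial. -/
noncomputable def stuf (q : R) : Word → Word → NCPoly R
  | [], v => Finsupp.single v 1
  | u, [] => Finsupp.single u 1
  | s :: u, t :: v =>
      Finsupp.mapDomain (fun w => s :: w) (stuf q u (t :: v)) +
      Finsupp.mapDomain (fun w => t :: w) (stuf q (s :: u) v) +
      q • Finsupp.mapDomain (fun w => (s + t) :: w) (stuf q u v)
  termination_by u v => u.length + v.length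
  decreasing_by all_goals (simp only [List.length_cons]; omega)

/-- Bilinear extension of the `q`-stuffle product to polynomials. -/
noncomputable def stufP (q : R) (P Q : NCPoly R) : NCPoly R :=
  P.sum fun u a => Q.sum fun v b => (a * b) • stuf q u v

/-- Concatenation product of polynomials. -/
noncomputable def concP (P Q : NCPoly R) : NCPoly R :=
  P.sum fun u a => Q.sum fun v b => Finsupp.single (u ++ v) (a * b)

/-- Concatenation product of a list of polynomials. -/
noncomputable def concList : List (NCPoly R) → NCPoly R
  | [] => Finsupp.single [] 1
  | P :: L => concP P (concList L)

/-- `q`-stuffle product of a list of words. -/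
noncomputable def stufList (q : R) : List Word → NCPoly R
  | [] => Finsupp.single [] 1
  | u :: L => stufP q (Finsupp.single u 1) (stufList q L)

/-- A formal power series over `Y` is a function `Word → R`; `S w = ⟨S, w⟩`. -/
def unitS : Word → R := fun w => if w = [] then 1 else 0

/-- Pairing `⟨S, P⟩ = Σ_w ⟨S,w⟩⟨P,w⟩` between a series and a polynomial. -/
noncomputable def pairS (S : Word → R) (P : NCPoly R) : R := P.sum fun w c => c * S w

/-- Pairing between two polynomials. -/
noncomputable def pairP (P Q : NCPoly R) : R := Q.sum fun w c => c * P w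

/-- The finite set of all words of weight `n`. -/
noncomputable def wordsOfWeight : ℕ → Finset Word
  | 0 => {[]}
  | n + 1 =>
      (Finset.range (n + 1)).attach.biUnion fun i =>
        (wordsOfWeight i.1).image fun w => (n + 1 - i.1).toPNat' :: w
  termination_by n => n
  decreasing_by exact Finset.mem_range.mp i.2

/-- All words of weight at most `n`. -/
noncomputable def wordsUpTo (n : ℕ) : Finset Word := (Finset.range (n + 1)).biUnion wordsOfWeight

/-- The `q`-stuffle product of two formal power series (coefficient-wise, the sum
is finite since the `q`-stuffle preserves weight). -/
noncomputable def stufS (q : R) (S T : Word → R) : Word → R :=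
  fun w => ∑ u ∈ wordsUpTo (weight w), ∑ v ∈ wordsUpTo (weight w),
    S u * T v * (stuf q u v) w

/-- `q`-stuffle product of a list of series. -/
noncomputable def stufSList (q : R) (L : List (Word → R)) : Word → R :=
  L.foldr (stufS q) unitS

/-- All ways of writing a word as a concatenation of nonempty words. -/
noncomputable def splits : Word → Finset (List Word)
  | [] => {[]}
  | a :: v =>
      (Finset.range (v.length + 1)).attach.biUnion fun i =>
        (splits (v.drop i.1)).image fun L => (a :: v.take i.1) :: L
  termination_by w => w.length
  decreasing_by simp [List.length_drop] <;> omega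

/-- Lists of length `n` with entries in the finite set `s`. -/
noncomputable def tuples (s : Finset Word) : ℕ → Finset (List Word)
  | 0 => {[]}
  | n + 1 => s.biUnion fun u => (tuples s n).image fun L => u :: L

/-- The Eulerian-type projector `π₁` associated to the `q`-stuffle:
`π₁(w) = Σ_{k≥1} ((-1)^{k-1}/k) Σ_{u_1,…,u_k ∈ Y⁺} ⟨w | u_1 ⊛_q ⋯ ⊛_q u_k⟩ u_1⋯u_k`. -/
noncomputable def qpi1 [Algebra ℚ R] (q : R) (w : Word) : NCPoly R :=
  ∑ v ∈ wordsUpTo (weight w),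
    Finsupp.single v
      (∑ n ∈ Finset.Icc 1 (weight w),
        ((-1 : ℚ) ^ (n - 1) / n) •
          ∑ L ∈ (splits v).filter (fun L => L.length = n), (stufList q L) w)

/-- The adjoint projector `π̌₁`:
`π̌₁(w) = Σ_{k≥1} ((-1)^{k-1}/k) Σ_{u_1⋯u_k = w, u_i ∈ Y⁺} u_1 ⊛_q ⋯ ⊛_q u_k`. -/
noncomputable def qpi1Check [Algebra ℚ R] (q : R) (w : Word) : NCPoly R :=
  ∑ L ∈ splits w, ((-1 : ℚ) ^ (L.length - 1) / (L.length : ℚ)) • stufList q L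

/-- `S` is primitive for the coproduct dual to the `q`-stuffle:
`Δ S = S ⊗ 1 + 1 ⊗ S`, read off on the coefficient at `u ⊗ v`. -/
def IsPrimitive (q : R) (S : Word → R) : Prop :=
  ∀ u v : Word, pairS S (stuf q u v) =
    (if v = [] then S u else 0) + (if u = [] then S v else 0)

/-- `S` is group-like for the coproduct dual to the `q`-stuffle: `Δ S = S ⊗ S`. -/
def IsGroupLike (q : R) (S : Word → R) : Prop :=
  ∀ u v : Word, pairS S (stuf q u v) = S u * S v

/-- Concatenation (Cauchy) product of two series. -/
noncomputable def concS (S T : Word → R) : Word → R :=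
  fun w => ∑ i ∈ Finset.range (w.length + 1), S (w.take i) * T (w.drop i)

/-- Concatenation powers of a series. -/
noncomputable def concPow (S : Word → R) : ℕ → Word → R
  | 0 => unitS
  | n + 1 => concS S (concPow S n)

/-- Formal logarithm `log S = Σ_{n≥1} (-1)^{n-1} (S-1)^n / n` (for `S` with constant term 1,
the sum at a word `w` has at most `|w|` nonzero terms). -/
noncomputable def logS [Algebra ℚ R] (S : Word → R) : Word → R :=
  fun w => ∑ n ∈ Finset.Icc 1 w.length,
    ((-1 : ℚ) ^ (n - 1) / n) • concPow (S - unitS) n w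

/-- The product on `R⟨⟨Y⟩⟩ ⊗^ R⟨⟨Y⟩⟩` where the left factor is multiplied by `⊛_q`
and the right factor by concatenation; a tensor is a function `Word → Word → R`. -/
noncomputable def tmul (q : R) (A B : Word → Word → R) : Word → Word → R :=
  fun w w' => ∑ i ∈ Finset.range (w'.length + 1),
    stufS q (fun u => A u (w'.take i)) (fun u => B u (w'.drop i)) w

/-- The unit `1 ⊗ 1` of the tensor algebra. -/
def unitT : Word → Word → R := fun u v => if u = [] ∧ v = [] then 1 else 0

/-- Powers in the tensor algebra. -/
noncomputable def tpow (q : R) (A : Word → Word → R) : ℕ → Word → Word → R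
  | 0 => unitT
  | n + 1 => tmul q A (tpow q A n)

/-- Formal logarithm in the tensor algebra. -/
noncomputable def logT [Algebra ℚ R] (q : R) (A : Word → Word → R) : Word → Word → R :=
  fun w w' => ∑ n ∈ Finset.Icc 1 w'.length,
    ((-1 : ℚ) ^ (n - 1) / n) • tpow q (A - unitT) n w w'

/-- The diagonal series `D_Y = Σ_w w ⊗ w`. -/
def diagT : Word → Word → R := fun u v => if u = v then 1 else 0

/-- Order on words: lexicographic extension of the order `y_1 > y_2 > ⋯` on letters
(`wlt u v` means `u < v`). -/
def wlt (u v : Word) : Prop := List.Lex (fun a b : ℕ+ => b < a) u v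

/-- A word is Lyndon if it is nonempty and strictly smaller than each of its proper suffixes. -/
def IsLyndon (w : Word) : Prop :=
  w ≠ [] ∧ ∀ i, 0 < i → i < w.length → wlt w (w.drop i)

/-- Index of the standard factorization of a Lyndon word: the right factor is the
longest proper Lyndon suffix. -/
noncomputable def stdIdx (l : Word) : ℕ :=
  sInf {i | 0 < i ∧ i < l.length ∧ IsLyndon (l.drop i)}

/-- The family `Π_l`, for `l` a Lyndon word: `Π_{y_k} = π₁(y_k)`, and
`Π_l = [Π_s, Π_r]` for the standard factorization `l = (s, r)`. -/
noncomputable def PiL [Algebra ℚ R] (q : R) : Word → NCPoly R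
  | [] => Finsupp.single [] 1
  | [s] => qpi1 q [s]
  | a :: b :: w =>
      if h : 0 < stdIdx (a :: b :: w) ∧ stdIdx (a :: b :: w) < (a :: b :: w).length then
        concP (PiL q ((a :: b :: w).take (stdIdx (a :: b :: w))))
              (PiL q ((a :: b :: w).drop (stdIdx (a :: b :: w)))) -
        concP (PiL q ((a :: b :: w).drop (stdIdx (a :: b :: w))))
              (PiL q ((a :: b :: w).take (stdIdx (a :: b :: w))))
      else 0
  termination_by w => w.length
  decreasing_by all_goals (simp only [List.length_take, List.length_drop, List.length_cons] at h ⊢; omega)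

/-- The Lyndon factorization of a word into a nonincreasing product of Lyndon words
(repeatedly take the longest Lyndon prefix). -/
noncomputable def lynFact : Word → List Word
  | [] => []
  | a :: w =>
      (a :: w).take (sSup {i | i ≤ w.length ∧ IsLyndon ((a :: w).take (i + 1))} + 1) ::
      lynFact ((a :: w).drop (sSup {i | i ≤ w.length ∧ IsLyndon ((a :: w).take (i + 1))} + 1))
  termination_by w => w.length
  decreasing_by simp only [List.length_drop, List.length_cons]; omega

/-- The PBW-type basis: `Π_w = Π_{l_1} ⋯ Π_{l_n}` for the Lyndon factorization
`w = l_1 ⋯ l_n`, `l_1 ≥ ⋯ ≥ l_n`. -/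
noncomputable def PiW [Algebra ℚ R] (q : R) (w : Word) : NCPoly R :=
  concList ((lynFact w).map (PiL q))


/-
The coefficient of `π₁(y_m)` at a word `v` of weight `m` is `q^{|v|-1}` times the coefficient
`(-1)^{|v|-1}/|v|` of `x^{|v|}` in `log(1+x)`: in the defining sum only the splitting of `v` into
letters contributes, since a `q`-stuffle of `k` nonempty words reaches the letter `y_m` only when
all of them are letters, and then with coefficient `q^{k-1}`. Expanding the concatenation
products, the coefficient of a word `w` of weight `s` on the right side becomes
`q^{|w|-1} ∑_k (1/k!) [x^{|w|}] log(1+x)^k = q^{|w|-1} [x^{|w|}] exp(log(1+x))`,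
and `exp(log(1+x)) = 1 + x` because both sides solve `(1+x) f' = f` with `f(0) = 1`.
-/

namespace PowerSeries

section CommRing

variable {A : Type*} [CommRing A]

theorem coeff_pow_eq_zero_of_lt {f : A⟦X⟧} (hf : constantCoeff f = 0) {n r : ℕ} (h : r < n) :
    coeff r (f ^ n) = 0 :=
  X_pow_dvd_iff.mp (pow_dvd_pow_of_dvd (X_dvd_iff.mpr hf) n) r h

theorem coeff_subst_eq_sum_Icc (g : A⟦X⟧) {f : A⟦X⟧} (hf : constantCoeff f = 0) {r N : ℕ}
    (hr : 1 ≤ r) (hrN : r ≤ N) :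
    coeff r (g.subst f) = ∑ n ∈ Finset.Icc 1 N, coeff n g * coeff r (f ^ n) := by
  rw [coeff_subst' (HasSubst.of_constantCoeff_zero' hf)]
  apply finsum_eq_sum_of_support_subset
  intro n hn
  rw [Function.mem_support] at hn
  rw [Finset.coe_Icc, Set.mem_Icc]
  constructor
  · rcases n with _ | n
    · simp [coeff_one] at hn
      omega
    · omega
  · by_contra h
    exact hn (by rw [coeff_pow_eq_zero_of_lt hf (by omega), smul_zero])

theorem constantCoeff_subst_of_constantCoeff_eq_zero (g : A⟦X⟧) {f : A⟦X⟧}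
    (hf : constantCoeff f = 0) : constantCoeff (g.subst f) = constantCoeff g := by
  rw [← coeff_zero_eq_constantCoeff_apply, coeff_subst' (HasSubst.of_constantCoeff_zero' hf),
    finsum_eq_single _ 0 fun n hn => by rw [coeff_pow_eq_zero_of_lt hf (by omega), smul_zero]]
  simp

variable [Algebra ℚ A]

theorem one_add_X_mul_derivative_log : (1 + X) * d⁄dX A (log A) = 1 := by
  ext n
  rw [deriv_log, add_mul, one_mul, map_add, coeff_one]
  rcases n with _ | n
  · simp
  · rw [coeff_succ_X_mul]
    simp [pow_succ]

theorem eq_of_one_add_X_mul_derivative {f g : A⟦X⟧} (hf : (1 + X) * d⁄dX A f = f)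
    (hg : (1 + X) * d⁄dX A g = g) (h0 : constantCoeff f = constantCoeff g) : f = g := by
  set h := f - g
  have hh : (1 + X) * d⁄dX A h = h := by rw [map_sub, mul_sub, hf, hg]
  suffices ∀ n, coeff n h = 0 by
    rw [← sub_eq_zero]
    ext n
    rw [this, map_zero]
  intro n
  induction n with
  | zero => simp [h, h0]
  | succ n ih =>
    -- the coefficient of `X ^ n` in `(1 + X) h' = h` reads `(n + 1) h_{n+1} + n h_n = h_n`
    have key := congrArg (coeff n) hh
    have hX : coeff n (X * d⁄dX A h) = 0 := by
      rcases n with _ | n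
      · simp
      · rw [coeff_succ_X_mul, coeff_derivative, ih, zero_mul]
    rw [add_mul, one_mul, map_add, coeff_derivative, ih, hX, add_zero] at key
    have hunit : IsUnit ((n : A) + 1) := by
      simpa using (algebraMap ℚ A).isUnit_map
        (isUnit_iff_ne_zero.mpr (by positivity : (n : ℚ) + 1 ≠ 0))
    exact hunit.mul_left_eq_zero.mp key

theorem exp_subst_log : (exp A).subst (log A) = 1 + X := by
  apply eq_of_one_add_X_mul_derivative
  · rw [derivative_subst HasSubst.log, derivative_exp, mul_left_comm,
      one_add_X_mul_derivative_log, mul_one]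
  · simp
  · simp [constantCoeff_subst_of_constantCoeff_eq_zero _ constantCoeff_log, constantCoeff_exp]

end CommRing

end PowerSeries

open PowerSeries

section Lists

variable {α : Type*}

theorem Finsupp.mapDomain_cons_apply_nil {M : Type*} [AddCommMonoid M] (a : α)
    (P : List α →₀ M) : P.mapDomain (a :: ·) [] = 0 :=
  Finsupp.mapDomain_of_notMem_range _ _ (by simp)

theorem Finsupp.mapDomain_cons_apply_cons [DecidableEq α] {M : Type*} [AddCommMonoid M]
    (a b : α) (w : List α) (P : List α →₀ M) :
    P.mapDomain (a :: ·) (b :: w) = if a = b then P w else 0 := by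
  split_ifs with h
  · subst h
    exact Finsupp.mapDomain_apply List.cons_injective P w
  · exact Finsupp.mapDomain_of_notMem_range _ _ (by simp [h])

theorem List.flatten_ne_nil_of_forall_ne_nil {L : List (List α)} (hL : ∀ u ∈ L, u ≠ [])
    (hne : L ≠ []) : L.flatten ≠ [] :=
  List.flatten_ne_nil_iff.mpr ⟨L.head hne, L.head_mem hne, hL _ (L.head_mem hne)⟩

theorem List.eq_map_singleton_flatten {L : List (List α)} (h : ∀ u ∈ L, u.length = 1) :
    L = L.flatten.map fun a => [a] := by
  induction L with
  | nil => rfl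
  | cons u L ih =>
    obtain ⟨a, rfl⟩ := List.length_eq_one_iff.mp (h u (by simp))
    simpa using ih fun v hv => h v (by simp [hv])

theorem pow_length_sub_one_mul_prod {L : List (List α)} (hL : ∀ u ∈ L, u ≠ [])
    (c : List α → R) (q : R) :
    q ^ (L.length - 1) * (L.map fun u => c u * q ^ (u.length - 1)).prod =
      (L.map c).prod * q ^ (L.flatten.length - 1) := by
  induction L with
  | nil => simp
  | cons u L ih =>
    rcases eq_or_ne L [] with rfl | hne
    · simp
    have hL' : ∀ v ∈ L, v ≠ [] := fun v hv => hL v (by simp [hv])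
    have hu := List.length_pos_iff.mpr (hL u (by simp))
    have hlen := List.length_pos_iff.mpr hne
    have hflat := List.length_pos_iff.mpr (List.flatten_ne_nil_of_forall_ne_nil hL' hne)
    simp only [List.map_cons, List.prod_cons, List.length_cons, List.flatten_cons,
      List.length_append, Nat.add_sub_cancel]
    calc q ^ L.length * (c u * q ^ (u.length - 1) * (L.map fun u => c u * q ^ (u.length - 1)).prod)
        = c u * q ^ (u.length - 1) * q *
            (q ^ (L.length - 1) * (L.map fun u => c u * q ^ (u.length - 1)).prod) := by
          rw [← pow_sub_one_mul hlen.ne']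
          ring
      _ = c u * (L.map c).prod * q ^ (u.length + L.flatten.length - 1) := by
          rw [ih hL', show u.length + L.flatten.length - 1 =
            (u.length - 1) + 1 + (L.flatten.length - 1) by omega, pow_add, pow_add, pow_one]
          ring

end Lists

theorem weight_cons (a : ℕ+) (v : Word) : weight (a :: v) = a + weight v := by
  simp [weight]

theorem weight_singleton (a : ℕ+) : weight [a] = a := by
  simp [weight]

theorem weight_append (u v : Word) : weight (u ++ v) = weight u + weight v := by
  simp [weight]

-- Not `rfl`: in `weight` the coercion `ℕ+ → ℕ` is inserted at the level of lists.
theorem weight_eq_sum_map_val (w : Word) : weight w = (w.map PNat.val).sum := by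
  induction w with
  | nil => rfl
  | cons a w ih => simp [weight_cons, ih]

theorem weight_flatten (L : List Word) : weight L.flatten = (L.map weight).sum := by
  induction L with
  | nil => rfl
  | cons u L ih => simp [weight_append, ih]

theorem weight_pos {v : Word} (hv : v ≠ []) : 0 < weight v := by
  obtain ⟨a, v, rfl⟩ := List.exists_cons_of_ne_nil hv
  simp [weight_cons]

theorem weight_eq_zero_iff {v : Word} : weight v = 0 ↔ v = [] :=
  ⟨fun h => by_contra fun hv => (weight_pos hv).ne' h, fun h => h ▸ rfl⟩

theorem length_le_weight (v : Word) : v.length ≤ weight v := by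
  induction v with
  | nil => simp [weight]
  | cons a v ih =>
    have := a.pos
    simp only [List.length_cons, weight_cons]
    omega

theorem singleton_eq_iff_length_eq_one {w : Word} {s : ℕ+} (hw : weight w = s) :
    [s] = w ↔ w.length = 1 := by
  constructor
  · rintro rfl
    rfl
  · intro h
    obtain ⟨a, rfl⟩ := List.length_eq_one_iff.mp h
    rw [weight_singleton, PNat.coe_inj] at hw
    rw [hw]

theorem mem_wordsOfWeight {n : ℕ} {v : Word} : v ∈ wordsOfWeight n ↔ weight v = n := by
  induction n using wordsOfWeight.induct generalizing v with
  | case1 => simp [wordsOfWeight, weight_eq_zero_iff]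
  | case2 n ih =>
    rw [wordsOfWeight]
    simp only [Finset.mem_biUnion, Finset.mem_attach, true_and, Finset.mem_image, Subtype.exists,
      Finset.mem_range, ih]
    constructor
    · rintro ⟨i, hi, v, rfl, rfl⟩
      rw [weight_cons, Nat.toPNat'_coe, if_pos (by omega)]
      omega
    · intro hv
      rcases v with _ | ⟨a, v⟩
      · simp [weight] at hv
      · rw [weight_cons] at hv
        refine ⟨weight v, by have := a.pos; omega, v, rfl, ?_⟩
        rw [show n + 1 - weight v = a by omega, PNat.coe_toPNat']

theorem mem_wordsUpTo {n : ℕ} {v : Word} : v ∈ wordsUpTo n ↔ weight v ≤ n := by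
  simp [wordsUpTo, mem_wordsOfWeight]

theorem sum_wordsOfWeight_ite_map_weight_eq {M : Type*} [AddCommMonoid M] {L : List Word}
    (hL : ∀ u ∈ L, u ≠ []) (s n : ℕ) (x : M) :
    ∑ c ∈ (wordsOfWeight s).filter (·.length = n),
        (if L.map weight = c.map (↑) then x else 0) =
      if weight L.flatten = s ∧ L.length = n then x else 0 := by
  have hprofile : ∀ c : Word,
      L.map weight = c.map (↑) ↔ c = L.map fun u => (weight u).toPNat' := by
    intro c
    constructor
    · intro h
      apply List.map_injective_iff.mpr PNat.coe_injective
      rw [← h, List.map_map]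
      exact List.map_congr_left fun u hu => (PNat.toPNat'_coe (weight_pos (hL u hu))).symm
    · rintro rfl
      rw [List.map_map]
      exact List.map_congr_left fun u hu => (PNat.toPNat'_coe (weight_pos (hL u hu))).symm
  have hweight := (hprofile _).mpr rfl
  simp_rw [hprofile]
  rw [Finset.sum_ite_eq']
  refine if_congr ?_ rfl rfl
  rw [Finset.mem_filter, mem_wordsOfWeight, weight_eq_sum_map_val, ← hweight, ← weight_flatten,
    List.length_map]

theorem mem_splits {w : Word} {L : List Word} :
    L ∈ splits w ↔ L.flatten = w ∧ ∀ u ∈ L, u ≠ [] := by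
  induction w using splits.induct generalizing L with
  | case1 =>
    rw [splits, Finset.mem_singleton]
    constructor
    · rintro rfl
      simp
    · rintro ⟨hL, hne⟩
      rw [List.flatten_eq_nil_iff] at hL
      exact List.eq_nil_iff_forall_not_mem.mpr fun u hu => hne u hu (hL u hu)
  | case2 a v ih =>
    rw [splits]
    simp only [Finset.mem_biUnion, Finset.mem_attach, true_and, Finset.mem_image, Subtype.exists,
      Finset.mem_range, ih]
    constructor
    · rintro ⟨i, -, L', ⟨hL', hne⟩, rfl⟩
      refine ⟨by simp [hL'], ?_⟩
      simpa using hne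
    · rintro ⟨hL, hne⟩
      obtain _ | ⟨_ | ⟨b, u⟩, L'⟩ := L
      · simp at hL
      · simp at hne
      · simp only [List.flatten_cons, List.cons_append, List.cons.injEq] at hL
        obtain ⟨rfl, rfl⟩ := hL
        exact ⟨u.length, by simp, L', ⟨by simp, fun x hx => hne x (by simp [hx])⟩, by simp⟩

theorem splits_nil : splits [] = {[]} := by
  rw [splits]

theorem map_singleton_mem_splits (v : Word) : v.map (fun a => [a]) ∈ splits v :=
  mem_splits.mpr ⟨by simp [← List.flatMap_def], by simp⟩

theorem sum_splits_cons {M : Type*} [AddCommMonoid M] (a : ℕ+) (v : Word) (F : List Word → M) :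
    ∑ L ∈ splits (a :: v), F L =
      ∑ i ∈ Finset.range (v.length + 1),
        ∑ L ∈ splits (v.drop i), F ((a :: v.take i) :: L) := by
  rw [splits, Finset.sum_biUnion, ← Finset.sum_attach (Finset.range _)]
  · exact Finset.sum_congr rfl fun i _ =>
      Finset.sum_image fun _ _ _ _ h => (List.cons.inj h).2
  · intro i _ j _ hij
    simp only [Function.onFun, Finset.disjoint_left, Finset.mem_image, not_exists, not_and]
    rintro _ ⟨L, -, rfl⟩ L' - h
    have hi := Finset.mem_range.mp i.2
    have hj := Finset.mem_range.mp j.2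
    have := congrArg List.length (List.cons.inj (List.cons.inj h).1).2
    simp only [List.length_take] at this
    exact hij (Subtype.ext (by omega))

theorem sum_splits_ite_prod_coeff_eq_coeff_pow {A : Type*} [CommSemiring A] {f : A⟦X⟧}
    (hf : constantCoeff f = 0) (w : Word) (n : ℕ) :
    ∑ L ∈ splits w, (if L.length = n then (L.map fun u => coeff u.length f).prod else 0) =
      coeff w.length (f ^ n) := by
  induction n generalizing w with
  | zero =>
    rcases w with _ | ⟨a, v⟩
    · simp [splits_nil]
    · rw [Finset.sum_eq_zero fun L hL => if_neg fun h => by simp_all [mem_splits]]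
      simp [coeff_one]
  | succ n ih =>
    rcases w with _ | ⟨a, v⟩
    · simp [splits_nil, hf]
    · rw [sum_splits_cons, pow_succ', coeff_mul,
        Finset.Nat.sum_antidiagonal_eq_sum_range_succ (fun i j => coeff i f * coeff j (f ^ n)),
        List.length_cons, Finset.sum_range_succ' _ (v.length + 1)]
      simp only [coeff_zero_eq_constantCoeff_apply, hf, zero_mul, add_zero]
      refine Finset.sum_congr rfl fun i hi => ?_
      have hi : i ≤ v.length := Nat.lt_succ_iff.mp (Finset.mem_range.mp hi)
      rw [show v.length + 1 - (i + 1) = (v.drop i).length by simp, ← ih, Finset.mul_sum]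
      refine Finset.sum_congr rfl fun L _ => ?_
      simp only [List.length_cons, add_left_inj, List.map_cons, List.prod_cons, List.length_take,
        mul_ite, mul_zero, min_eq_left hi]

theorem concP_apply (P Q : NCPoly R) (w : Word) :
    concP P Q w = ∑ i ∈ Finset.range (w.length + 1), P (w.take i) * Q (w.drop i) := by
  simp only [concP, Finsupp.sum, Finsupp.finsetSum_apply, Finsupp.single_apply]
  rw [← Finset.sum_product']
  symm
  refine Finset.sum_bij_ne_zero (fun i _ _ => (w.take i, w.drop i)) ?_ ?_ ?_ ?_
  · intro i _ h
    simp only [Finset.mem_product, Finsupp.mem_support_iff]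
    exact ⟨left_ne_zero_of_mul h, right_ne_zero_of_mul h⟩
  · intro i hi _ j hj _ h
    have := congrArg (List.length ∘ Prod.fst) h
    simp only [Function.comp, List.length_take, Finset.mem_range] at this hi hj
    omega
  · rintro ⟨u, v⟩ - h
    have huv : u ++ v = w := by
      by_contra h'
      simp [h'] at h
    exact ⟨u.length, by simp [← huv], by simpa [← huv] using h, by simp [← huv]⟩
  · intro i _ _
    simp

theorem concList_apply {Ps : List (NCPoly R)} (hPs : ∀ P ∈ Ps, P [] = 0) (w : Word) :
    concList Ps w = ∑ L ∈ splits w,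
      if L.length = Ps.length then (List.zipWith (fun P u => P u) Ps L).prod else 0 := by
  induction Ps generalizing w with
  | nil =>
    rw [concList, Finsupp.single_apply]
    simp only [List.length_nil, List.length_eq_zero_iff, List.zipWith_nil_left, List.prod_nil]
    rw [Finset.sum_ite_eq']
    simp [mem_splits]
  | cons P Ps ih =>
    have hP : P [] = 0 := hPs P (by simp)
    rw [concList, concP_apply]
    rcases w with _ | ⟨a, v⟩
    · simp [splits_nil, hP]
    · rw [sum_splits_cons, List.length_cons, Finset.sum_range_succ' _ (v.length + 1)]
      simp only [List.take_zero, List.drop_zero, hP, zero_mul, add_zero, List.take_succ_cons,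
        List.drop_succ_cons, ih (fun P hP' => hPs P (by simp [hP'])), Finset.mul_sum, mul_ite,
        mul_zero, ite_self, Finset.sum_const_zero, List.length_cons, add_left_inj,
        List.zipWith_cons_cons, List.prod_cons]

theorem stuf_nil_right (q : R) (u : Word) : stuf q u [] = Finsupp.single u 1 := by
  cases u <;> simp [stuf]

theorem stuf_apply_nil (q : R) (u v : Word) :
    stuf q u v [] = if u = [] ∧ v = [] then 1 else 0 := by
  induction u, v using stuf.induct with
  | case1 v => simp [stuf, Finsupp.single_apply]
  | case2 u hu => simp [stuf_nil_right, show u ≠ [] from hu]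
  | case3 s u t v => simp [stuf, Finsupp.mapDomain_cons_apply_nil]

theorem stuf_cons_cons_apply_singleton (q : R) (a b m : ℕ+) (u v : Word) :
    stuf q (a :: u) (b :: v) [m] = if u = [] ∧ v = [] ∧ a + b = m then q else 0 := by
  by_cases h : a + b = m <;> simp [stuf, Finsupp.mapDomain_cons_apply_cons, stuf_apply_nil, h]

theorem stuf_singleton_apply_singleton (q : R) (a m : ℕ+) (v : Word) :
    stuf q [a] v [m] =
      (if v = [] ∧ a = m then 1 else 0) + (if a < m ∧ v = [m - a] then q else 0) := by
  rcases v with _ | ⟨b, v⟩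
  · simp [stuf_nil_right, Finsupp.single_apply]
  · have hsum : a + b = m ↔ a < m ∧ b = m - a := by
      constructor
      · rintro rfl
        refine ⟨PNat.lt_add_right a b, PNat.eq ?_⟩
        rw [PNat.sub_coe, if_pos (PNat.lt_add_right a b)]
        simp
      · rintro ⟨h, rfl⟩
        exact PNat.add_sub_of_lt h
    simp only [stuf_cons_cons_apply_singleton, hsum, List.cons_ne_nil, false_and, if_false,
      zero_add, List.cons.injEq]
    exact if_congr (by tauto) rfl rfl

theorem stuf_cons_cons_apply_singleton_eq_zero (q : R) (a b m : ℕ+) (u v : Word) :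
    stuf q (a :: b :: u) v [m] = 0 := by
  rcases v with _ | ⟨c, v⟩
  · simp [stuf_nil_right]
  · simp [stuf_cons_cons_apply_singleton]

theorem stufList_cons_apply (q : R) (u : Word) (L : List Word) (w : Word) :
    stufList q (u :: L) w = (stufList q L).sum fun v c => c * stuf q u v w := by
  rw [stufList, stufP, Finsupp.sum_single_index (by simp), Finsupp.sum_apply]
  simp

theorem stufList_apply_nil (q : R) {L : List Word} (hL : ∀ u ∈ L, u ≠ []) :
    stufList q L [] = if L = [] then 1 else 0 := by
  rcases L with _ | ⟨u, L⟩
  · simp [stufList]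
  · simp [stufList_cons_apply, stuf_apply_nil, hL u (by simp)]

theorem stufList_singleton_cons_apply_singleton (q : R) (a m : ℕ+) (L : List Word) :
    stufList q ([a] :: L) [m] =
      (if a = m then stufList q L [] else 0) + (if a < m then q * stufList q L [m - a] else 0) := by
  simp only [stufList_cons_apply, stuf_singleton_apply_singleton, mul_add, Finsupp.sum_add]
  congr 1
  · by_cases h : a = m <;> simp [h]
  · by_cases h : a < m <;> simp +contextual [h, mul_comm]

theorem stufList_apply_singleton (q : R) {L : List Word} (hL : ∀ u ∈ L, u ≠ []) (m : ℕ+) :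
    stufList q L [m] =
      if (∀ u ∈ L, u.length = 1) ∧ weight L.flatten = m then q ^ (L.length - 1) else 0 := by
  induction L generalizing m with
  | nil => simp [stufList, weight, m.ne_zero.symm]
  | cons u L ih =>
    have hL' : ∀ v ∈ L, v ≠ [] := fun v hv => hL v (by simp [hv])
    obtain _ | ⟨a, _ | ⟨b, u⟩⟩ := u
    · simp at hL
    · rw [stufList_singleton_cons_apply_singleton, ih hL', stufList_apply_nil q hL']
      simp only [List.mem_cons, forall_eq_or_imp, List.length_nil, zero_add, true_and,
        List.flatten_cons, List.singleton_append, weight_cons, List.length_cons,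
        add_tsub_cancel_right]
      rcases eq_or_ne L [] with rfl | hne
      · simp [weight, PNat.coe_inj, eq_comm, (m - a).ne_zero.symm]
      have hW := weight_pos (List.flatten_ne_nil_of_forall_ne_nil hL' hne)
      have hlen := List.length_pos_iff.mpr hne
      rw [if_neg hne, ite_self, zero_add]
      by_cases ham : a < m
      · have hsub : ((m - a : ℕ+) : ℕ) = m - a := by rw [PNat.sub_coe, if_pos ham]
        rw [if_pos ham, mul_ite, mul_zero, ← pow_succ', Nat.sub_add_cancel hlen, hsub]
        exact if_congr (and_congr_right' (by omega)) rfl rfl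
      · rw [if_neg ham, if_neg]
        rintro ⟨-, h⟩
        exact ham (PNat.coe_lt_coe _ _ |>.mp (by omega))
    · rw [stufList_cons_apply]
      simp [stuf_cons_cons_apply_singleton_eq_zero]

theorem stufList_apply_singleton_of_mem_splits (q : R) {v : Word} {L : List Word}
    (hL : L ∈ splits v) (m : ℕ+) :
    stufList q L [m] =
      if L = v.map (fun a => [a]) ∧ weight v = m then q ^ (v.length - 1) else 0 := by
  obtain ⟨rfl, hne⟩ := mem_splits.mp hL
  have hletters : (∀ u ∈ L, u.length = 1) ↔ L = L.flatten.map fun a => [a] :=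
    ⟨List.eq_map_singleton_flatten, fun h u hu => by
      rw [h, List.mem_map] at hu
      obtain ⟨a, -, rfl⟩ := hu
      rfl⟩
  rw [stufList_apply_singleton q hne, if_congr (and_congr_left' hletters) rfl rfl]
  split_ifs with h
  · rw [List.length_flatten, List.map_congr_left (hletters.mpr h.1)]
    simp
  · rfl

section Projector

variable [Algebra ℚ R]

theorem qpi1_apply (q : R) (m : ℕ+) (v : Word) :
    qpi1 q [m] v =
      if weight v = m then coeff v.length (log R) * q ^ (v.length - 1) else 0 := by
  have hsum : ∀ n, ∑ L ∈ (splits v).filter (·.length = n), stufList q L [m] =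
      if n = v.length ∧ weight v = m then q ^ (v.length - 1) else 0 := by
    intro n
    rw [Finset.sum_congr rfl fun L hL =>
      stufList_apply_singleton_of_mem_splits q (Finset.mem_filter.mp hL).1 m]
    simp_rw [ite_and]
    rw [Finset.sum_ite_eq']
    simp [map_singleton_mem_splits, eq_comm]
  simp only [qpi1, Finsupp.finsetSum_apply, Finsupp.single_apply, weight_singleton]
  rw [Finset.sum_ite_eq']
  simp only [mem_wordsUpTo, hsum, ite_and, smul_ite, smul_zero, Finset.sum_ite_eq']
  by_cases hw : weight v = m
  · obtain ⟨k, hk⟩ : ∃ k, v.length = k + 1 :=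
      Nat.exists_eq_add_one.mpr (List.length_pos_iff.mpr (by rintro rfl; exact m.ne_zero hw.symm))
    simp [hw, hk, hw ▸ hk ▸ length_le_weight v, Algebra.smul_def, pow_succ]
  · simp [hw]

theorem prod_zipWith_qpi1_apply (q : R) {c : Word} {L : List Word} (h : L.length = c.length) :
    (List.zipWith (fun P u => P u) (c.map fun m => qpi1 q [m]) L).prod =
      if L.map weight = c.map (↑) then
        (L.map fun u => coeff u.length (log R) * q ^ (u.length - 1)).prod
      else 0 := by
  induction c generalizing L with
  | nil => simp_all
  | cons m c ih =>
    obtain _ | ⟨u, L⟩ := L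
    · simp at h
    · simp only [List.map_cons, List.zipWith_cons_cons, List.prod_cons, qpi1_apply,
        ih (Nat.succ_injective h), List.cons.injEq, ite_and]
      split_ifs <;> simp

theorem pow_mul_sum_concList_qpi1_apply (q : R) (s n : ℕ) (w : Word) :
    q ^ (n - 1) * ∑ c ∈ (wordsOfWeight s).filter (·.length = n),
      concList (c.map fun m => qpi1 q [m]) w =
      if weight w = s then coeff w.length (log R ^ n) * q ^ (w.length - 1) else 0 := by
  have hconst : ∀ c : Word, ∀ P ∈ c.map (fun m => qpi1 q [m]), P [] = 0 := by
    simp [qpi1_apply, weight]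
  simp only [concList_apply (hconst _), List.length_map]
  rw [Finset.sum_comm]
  have hinner : ∀ L ∈ splits w,
      ∑ c ∈ (wordsOfWeight s).filter (·.length = n), (if L.length = c.length then
        (List.zipWith (fun P u => P u) (c.map fun m => qpi1 q [m]) L).prod else 0) =
      if weight w = s ∧ L.length = n then
        (L.map fun u => coeff u.length (log R) * q ^ (u.length - 1)).prod
      else 0 := by
    intro L hL
    obtain ⟨rfl, hne⟩ := mem_splits.mp hL
    rw [← sum_wordsOfWeight_ite_map_weight_eq hne]
    refine Finset.sum_congr rfl fun c _ => ?_
    by_cases hlen : L.length = c.length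
    · rw [if_pos hlen, prod_zipWith_qpi1_apply q hlen]
    · rw [if_neg hlen, if_neg fun h => hlen (by simpa using congrArg List.length h)]
  rw [Finset.sum_congr rfl hinner]
  by_cases hw : weight w = s
  · simp only [hw, true_and, if_true]
    have hterm : ∀ L ∈ splits w,
        q ^ (n - 1) * (if L.length = n then
          (L.map fun u => coeff u.length (log R) * q ^ (u.length - 1)).prod else 0) =
        (if L.length = n then (L.map fun u => coeff u.length (log R)).prod else 0) *
          q ^ (w.length - 1) := by
      intro L hL
      obtain ⟨rfl, hne⟩ := mem_splits.mp hL
      split_ifs with hlen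
      · rw [← hlen, pow_length_sub_one_mul_prod hne]
      · simp
    rw [Finset.mul_sum, Finset.sum_congr rfl hterm, ← Finset.sum_mul,
      sum_splits_ite_prod_coeff_eq_coeff_pow constantCoeff_log]
  · simp [hw]

end Projector

/-- For every letter `y_s`,
`y_s = Σ_{k≥1} (q^{k-1}/k!) Σ_{s'_1+⋯+s'_k = s, s'_i ≥ 1} π₁(y_{s'_1}) ⋯ π₁(y_{s'_k})`. -/
theorem letter_expansion_pi1 [Algebra ℚ R] (q : R) (s : ℕ+) :
    Finsupp.single [s] (1 : R) =
      ∑ n ∈ Finset.Icc 1 (s : ℕ),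
        ((1 : ℚ) / n.factorial) • (q ^ (n - 1) •
          ∑ c ∈ (wordsOfWeight (s : ℕ)).filter (fun c => c.length = n),
            concList (c.map (fun m => qpi1 q [m]))) := by
  ext w
  simp only [Finsupp.finsetSum_apply, Finsupp.smul_apply, smul_eq_mul,
    pow_mul_sum_concList_qpi1_apply]
  rw [Finsupp.single_apply, eq_comm]
  by_cases hw : weight w = s
  · have hpos : 0 < w.length := List.length_pos_iff.mpr (by rintro rfl; exact s.ne_zero hw.symm)
    have hexp := coeff_subst_eq_sum_Icc (exp R) constantCoeff_log hpos (hw ▸ length_le_weight w)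
    simp only [hw, if_true, Algebra.smul_def, coeff_exp, ← mul_assoc] at hexp ⊢
    rw [← Finset.sum_mul, ← hexp, exp_subst_log]
    by_cases h1 : w.length = 1 <;>
      simp [singleton_eq_iff_length_eq_one hw, coeff_one, coeff_X, h1, hpos.ne']
  · rw [if_neg (by rintro rfl; exact hw (weight_singleton s))]
    simp [hw]
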